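/- The set {β₄γ₁, β₄, ε₄, β₄γ₁β₃} is a K-basis of the indecomposable projective module ẽ₄F over the algebra F = F(m,λ); in particular dim_K ẽ₄F = 4. -/

import Mathlib

/-!
The algebra `F(m,λ)` of Skowyrski's "Two tilts of higher spherical algebras",
realized as the quotient of the path algebra of the quiver `Q_F` by the
relations (F1)-(F7).  Vertices `1,…,6` are encoded as `0,…,5 : Fin 6`.
The path algebra is presented as the free algebra on the trivial paths
(idempotents) and the arrows, modulo the path-algebra relations
(orthogonal idempotents summing to `1`, source/target compatibility)
and the relations (F1)-(F7).  Paths compose left to right.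
-/

namespace TwoTiltsF

/-- Arrows of `Q_F`: α₁:1→2, α₃:1→6, β₁:1→5, β₃:1→4, α₂:2→3, α₄:6→3,
β₂:5→3, β₄:4→3, γ₁ γ₂:3→1. -/
inductive FArr | a1 | a2 | a3 | a4 | b1 | b2 | b3 | b4 | g1 | g2

/-- Source vertex of an arrow. -/
def FArr.src : FArr → Fin 6
  | .a1 => 0 | .a3 => 0 | .b1 => 0 | .b3 => 0
  | .a2 => 1 | .a4 => 5 | .b2 => 4 | .b4 => 3
  | .g1 => 2 | .g2 => 2

/-- Target vertex of an arrow. -/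
def FArr.tgt : FArr → Fin 6
  | .a1 => 1 | .a3 => 5 | .b1 => 4 | .b3 => 3
  | .a2 => 2 | .a4 => 2 | .b2 => 2 | .b4 => 2
  | .g1 => 0 | .g2 => 0

/-- The free algebra on trivial paths and arrows of `Q_F`. -/
abbrev FFree (K : Type*) [Field K] := FreeAlgebra K (Fin 6 ⊕ FArr)

variable {K : Type*} [Field K]

/-- Trivial path at vertex `i`. -/
def fe (i : Fin 6) : FFree K := FreeAlgebra.ι K (Sum.inl i)
/-- The arrow `a` as an element of the free algebra. -/
def fa (a : FArr) : FFree K := FreeAlgebra.ι K (Sum.inr a)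

def A1 : FFree K := fa .a1
def A2 : FFree K := fa .a2
def A3 : FFree K := fa .a3
def A4 : FFree K := fa .a4
def B1 : FFree K := fa .b1
def B2 : FFree K := fa .b2
def B3 : FFree K := fa .b3
def B4 : FFree K := fa .b4
def G1 : FFree K := fa .g1
def G2 : FFree K := fa .g2

/-- The defining relations of `F(m,λ)`: path algebra relations together
with (F1)-(F7). -/
inductive FRel (K : Type*) [Field K] (m : ℕ) (l : K) : FFree K → FFree K → Prop
  | orth (i j : Fin 6) : FRel K m l (fe i * fe j) (if i = j then fe i else 0)
  | total : FRel K m l (∑ i, fe i) 1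
  | src (a : FArr) : FRel K m l (fe a.src * fa a) (fa a)
  | tgt (a : FArr) : FRel K m l (fa a * fe a.tgt) (fa a)
  | F1a : FRel K m l (A1 * A2 - A3 * A4 + B1 * B2) 0
  | F1b : FRel K m l (A1 * A2 - A3 * A4 + B3 * B4 + l • ((A3 * A4 * G1) ^ (m - 1) * (A3 * A4))) 0
  | F2a : FRel K m l (A2 * G1) (A2 * G2)
  | F2b : FRel K m l (G2 * A1) (G1 * A1)
  | F3a : FRel K m l (A4 * G2) (A4 * G1 + l • ((A4 * G1 * A3) ^ (m - 1) * (A4 * G1)))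
  | F3b : FRel K m l (G2 * A3) (G1 * A3 + l • ((G1 * A3 * A4) ^ (m - 1) * (G1 * A3)))
  | F4a : FRel K m l (B2 * G1) 0
  | F4b : FRel K m l (B4 * G2) 0
  | F4c : FRel K m l (G1 * B1) 0
  | F4d : FRel K m l (G2 * B3) 0
  | F5a : FRel K m l (B2 * G2 * B1 * B2) 0
  | F5b : FRel K m l (B4 * G1 * B3 * B4) 0
  | F6a : FRel K m l (G1 * A1 * A2) (G1 * A3 * A4)
  | F6b : FRel K m l (A1 * A2 * G1) (A3 * A4 * G1)
  | F7a : FRel K m l ((A3 * A4 * G1) ^ m * A1) 0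
  | F7b : FRel K m l ((A3 * A4 * G1) ^ m * A3) 0
  | F7c : FRel K m l (G1 * (A3 * A4 * G1) ^ m) 0
  | F7d : FRel K m l (A2 * (G1 * A3 * A4) ^ m) 0
  | F7e : FRel K m l (A4 * (G1 * A3 * A4) ^ m) 0

/-- The algebra `F(m,λ)`. -/
abbrev FAlg (K : Type*) [Field K] (m : ℕ) (l : K) := RingQuot (FRel K m l)

/-- The canonical projection onto `F(m,λ)`. -/
noncomputable def fq (K : Type*) [Field K] (m : ℕ) (l : K) :
    FFree K →ₐ[K] FAlg K m l := RingQuot.mkAlgHom K (FRel K m l)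

/-- The image in `F(m,λ)` of the trivial path at vertex `i`. -/
noncomputable def fidem (K : Type*) [Field K] (m : ℕ) (l : K) (i : Fin 6) :
    FAlg K m l := fq K m l (fe i)

/-- The indecomposable projective right module `ẽᵢ F(m,λ)`, viewed as the
`K`-subspace `ẽᵢ·F(m,λ)` of `F(m,λ)`. -/
noncomputable def fproj (K : Type*) [Field K] (m : ℕ) (l : K) (i : Fin 6) :
    Submodule K (FAlg K m l) :=
  LinearMap.range (LinearMap.mulLeft K (fidem K m l i))

end TwoTiltsF

/-!
The right module `ẽ₄F` is generated by `ẽ₄`, and multiplying any of the four paths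
`β₄γ₁, β₄, ε₄, β₄γ₁β₃` on the right by a vertex or an arrow gives one of the four paths or zero.
The only product whose vanishing is not read off directly from (F2), (F4), (F5) is
`β₄γ₁α₃`: by (F3), `β₄γ₂α₃ = β₄γ₁α₃ (1 + λ (α₄γ₁α₃)^{m-1})`, the left side is zero by (F4),
and `α₄γ₁α₃` is nilpotent by (F7), so for `m ≥ 2` the second factor is a unit.
The four paths stay linearly independent in a four-dimensional representation of `F`
(the module `ẽ₄F` itself) in which only `γ₁, β₃, β₄` act nontrivially.
-/

open Submodule Set

theorem Submodule.mul_mem_span_of_mul_ι_mem {R X A ι : Type*} [CommSemiring R] [Semiring A]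
    [Algebra R A] (f : FreeAlgebra R X →ₐ[R] A) (hf : Function.Surjective f) {v : ι → A}
    (hv : ∀ i x, v i * f (FreeAlgebra.ι R x) ∈ span R (range v))
    {s : A} (hs : s ∈ span R (range v)) (a : A) : s * a ∈ span R (range v) := by
  have hgen : ∀ x, ∀ s ∈ span R (range v), s * f (FreeAlgebra.ι R x) ∈ span R (range v) := by
    intro x s hs
    induction hs using Submodule.span_induction with
    | mem _ h => obtain ⟨i, rfl⟩ := h; exact hv i x
    | zero => simp
    | add _ _ _ _ hs ht => rw [add_mul]; exact add_mem hs ht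
    | smul c _ _ hs => rw [smul_mul_assoc]; exact smul_mem _ c hs
  obtain ⟨z, rfl⟩ := hf a
  induction z using FreeAlgebra.induction generalizing s with
  | grade0 r => rw [AlgHom.commutes, ← Algebra.commutes, ← Algebra.smul_def]; exact smul_mem _ r hs
  | grade1 x => exact hgen x s hs
  | mul z w hz hw => rw [map_mul, ← mul_assoc]; exact hw (hz hs)
  | add z w hz hw => rw [map_add, mul_add]; exact add_mem (hz hs) (hw hs)

namespace TwoTiltsF

variable {K : Type*} [Field K] {m : ℕ} {l : K}

local notation "q" => fq K m l

lemma fq_eq_of_rel {x y : FFree K} (h : FRel K m l x y) : q x = q y :=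
  RingQuot.mkAlgHom_rel K h

lemma fq_fe_mul_fe (i j : Fin 6) : q (fe i) * q (fe j) = if i = j then q (fe i) else 0 := by
  rw [← map_mul, fq_eq_of_rel (FRel.orth i j)]
  split <;> simp

lemma fq_fe_src_mul_fa (a : FArr) : q (fe a.src) * q (fa a) = q (fa a) := by
  rw [← map_mul, fq_eq_of_rel (FRel.src a)]

lemma fq_fa_mul_fe_tgt (a : FArr) : q (fa a) * q (fe a.tgt) = q (fa a) := by
  rw [← map_mul, fq_eq_of_rel (FRel.tgt a)]

lemma mul_fq_fe_eq_zero {x : FAlg K m l} {t j : Fin 6} (hx : x * q (fe t) = x) (h : t ≠ j) :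
    x * q (fe j) = 0 := by
  rw [← hx, mul_assoc, fq_fe_mul_fe, if_neg h, mul_zero]

lemma mul_fq_fa_eq_zero {x : FAlg K m l} {t : Fin 6} {a : FArr} (hx : x * q (fe t) = x)
    (h : t ≠ a.src) : x * q (fa a) = 0 := by
  rw [← fq_fe_src_mul_fa, ← mul_assoc, mul_fq_fe_eq_zero hx h, zero_mul]

lemma fq_B4_G2 : q (B4 * G2) = 0 := by
  simpa using fq_eq_of_rel (m := m) (l := l) FRel.F4b

lemma fq_B4_G1_A1 : q (B4 * G1 * A1) = 0 := by
  rw [mul_assoc, map_mul, ← fq_eq_of_rel FRel.F2b, ← map_mul, ← mul_assoc, map_mul, fq_B4_G2,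
    zero_mul]

lemma fq_B4_G1_B1 : q (B4 * G1 * B1) = 0 := by
  rw [mul_assoc, map_mul, fq_eq_of_rel FRel.F4c, map_zero, mul_zero]

lemma fq_B4_G1_B3_B4 : q (B4 * G1 * B3 * B4) = 0 := by
  simpa using fq_eq_of_rel (m := m) (l := l) FRel.F5b

lemma isNilpotent_fq_A4_G1_A3 : IsNilpotent (q (A4 * G1 * A3)) := by
  refine ⟨m + 1, ?_⟩
  have h := fq_eq_of_rel (m := m) (l := l) FRel.F7e
  simp only [map_mul, map_pow, map_zero] at h ⊢
  rw [pow_succ, mul_assoc (q A4), ← mul_assoc, mul_pow_mul, ← mul_assoc, h, zero_mul, zero_mul]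

lemma fq_B4_G1_A3 (hm : 2 ≤ m) : q (B4 * G1 * A3) = 0 := by
  have hunit : IsUnit (1 + l • q (A4 * G1 * A3) ^ (m - 1)) :=
    ((isNilpotent_fq_A4_G1_A3.pow_of_pos (by omega)).smul l).isUnit_one_add
  have hF3 : q (B4 * G1 * A3) * (1 + l • q (A4 * G1 * A3) ^ (m - 1)) = q (B4 * G2 * A3) := by
    have h := fq_eq_of_rel (m := m) (l := l) FRel.F3b
    simp only [map_mul, map_add, map_smul, map_pow] at h ⊢
    rw [mul_assoc _ (q G2), h, mul_pow_mul]
    simp only [mul_add, mul_one, mul_smul_comm, mul_assoc]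
  rw [← hunit.mul_left_eq_zero, hF3, map_mul, fq_B4_G2, zero_mul]

def projFourPath : Fin 4 → FFree K
  | 0 => B4 * G1
  | 1 => B4
  | 2 => fe 3
  | 3 => B4 * G1 * B3

def projFourPathTgt : Fin 4 → Fin 6 := ![0, 2, 3, 3]

lemma fq_projFourPath_mul_fe_tgt (i : Fin 4) :
    q (projFourPath i) * q (fe (projFourPathTgt i)) = q (projFourPath i) := by
  have mul_fa_mul_fe_tgt (x : FFree K) (a : FArr) : q (x * fa a) * q (fe a.tgt) = q (x * fa a) := by
    rw [map_mul, mul_assoc, fq_fa_mul_fe_tgt]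
  fin_cases i
  · exact mul_fa_mul_fe_tgt B4 .g1
  · exact fq_fa_mul_fe_tgt .b4
  · exact (fq_fe_mul_fe 3 3).trans (if_pos rfl)
  · exact mul_fa_mul_fe_tgt (B4 * G1) .b3

lemma fq_projFourPath_mul_ι_mem_span (hm : 2 ≤ m) (i : Fin 4) (v : Fin 6 ⊕ FArr) :
    q (projFourPath i) * q (FreeAlgebra.ι K v) ∈ span K (range fun j => q (projFourPath j)) := by
  have hpath : ∀ j, q (projFourPath j) ∈ span K (range fun j => q (projFourPath j)) :=
    fun j => subset_span ⟨j, rfl⟩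
  have hzero : ∀ {x : FFree K}, q x = 0 → q x ∈ span K (range fun j => q (projFourPath j)) :=
    fun h => h ▸ zero_mem _
  have htgt := fq_projFourPath_mul_fe_tgt (m := m) (l := l) i
  rcases v with j | a
  · change _ * q (fe j) ∈ _
    by_cases hj : projFourPathTgt i = j
    · rw [← hj, htgt]
      exact hpath i
    · rw [mul_fq_fe_eq_zero htgt hj]
      exact zero_mem _
  · change _ * q (fa a) ∈ _
    by_cases ha : projFourPathTgt i = a.src
    · rw [← map_mul]
      fin_cases i <;> cases a <;> simp only [projFourPathTgt, FArr.src] at ha <;> (try contradiction)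
      · exact hzero fq_B4_G1_A1
      · exact hzero (fq_B4_G1_A3 hm)
      · exact hzero fq_B4_G1_B1
      · exact hpath 3
      · exact hpath 0
      · exact hzero fq_B4_G2
      · convert hpath 1 using 1
        exact (map_mul _ _ _).trans (fq_fe_src_mul_fa .b4)
      · exact hzero fq_B4_G1_B3_B4
    · rw [mul_fq_fa_eq_zero htgt ha]
      exact zero_mem _

lemma fq_fe_three_mul_projFourPath (i : Fin 4) :
    q (fe 3) * q (projFourPath i) = q (projFourPath i) := by
  have hB4 : q (fe 3) * q B4 = q B4 := fq_fe_src_mul_fa .b4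
  fin_cases i
  · change q (fe 3) * q (B4 * G1) = q (B4 * G1)
    rw [map_mul, ← mul_assoc, hB4]
  · exact hB4
  · exact (fq_fe_mul_fe 3 3).trans (if_pos rfl)
  · change q (fe 3) * q (B4 * G1 * B3) = q (B4 * G1 * B3)
    rw [map_mul, map_mul, ← mul_assoc, ← mul_assoc, hB4]

lemma span_fq_projFourPath_eq_fproj (hm : 2 ≤ m) :
    span K (range fun j => q (projFourPath j)) = fproj K m l 3 := by
  apply le_antisymm
  · rw [span_le]
    rintro _ ⟨i, rfl⟩
    exact ⟨_, fq_fe_three_mul_projFourPath i⟩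
  · rintro _ ⟨y, rfl⟩
    exact mul_mem_span_of_mul_ι_mem q (RingQuot.mkAlgHom_surjective K _)
      (fq_projFourPath_mul_ι_mem_span hm) (subset_span ⟨2, rfl⟩) y

open Matrix

def projFourArrowMatrix : FArr → Matrix (Fin 4) (Fin 4) K
  | .g1 => single 1 0 1
  | .b3 => single 0 3 1
  | .b4 => single 2 1 1
  | _ => 0

/-- `ẽ₄F` itself as a representation: right multiplication in the basis
`β₄γ₁, β₄, ε₄, β₄γ₁β₃`, acting on row vectors. -/
noncomputable def projFourRep : FFree K →ₐ[K] Matrix (Fin 4) (Fin 4) K :=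
  FreeAlgebra.lift K <| Sum.elim
    ![single 0 0 1, 0, single 1 1 1, single 2 2 1 + single 3 3 1, 0, 0] projFourArrowMatrix

lemma projFourRep_eq_of_rel (hm : m ≠ 0) {x y : FFree K} (h : FRel K m l x y) :
    projFourRep x = projFourRep y := by
  induction h with
  | orth i j => fin_cases i <;> fin_cases j <;> simp [projFourRep, fe, mul_add, add_mul]
  | total =>
    ext i j
    fin_cases i <;> fin_cases j <;> simp [projFourRep, fe, Fin.sum_univ_six, one_apply]
  | src a => cases a <;> simp [projFourRep, projFourArrowMatrix, fe, fa, FArr.src, add_mul]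
  | tgt a => cases a <;> simp [projFourRep, projFourArrowMatrix, fe, fa, FArr.tgt, mul_add]
  | _ => simp [projFourRep, projFourArrowMatrix, fa, A1, A2, A3, A4, B1, B2, B3, B4, G1, G2, hm]

lemma linearIndependent_fq_projFourPath (hm : m ≠ 0) :
    LinearIndependent K fun i => q (projFourPath i) := by
  let ρ : FAlg K m l →ₐ[K] Matrix (Fin 4) (Fin 4) K :=
    RingQuot.liftAlgHom K ⟨projFourRep, fun _ _ => projFourRep_eq_of_rel hm⟩
  let rowTwo : Matrix (Fin 4) (Fin 4) K →ₗ[K] Fin 4 → K := LinearMap.pi (entryLinearMap K K 2)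
  -- row `2` of the matrix of a path `p` is the coordinate vector of `ε₄ p = p`
  refine LinearIndependent.of_comp (rowTwo ∘ₗ ρ.toLinearMap) ?_
  convert (Pi.basisFun K (Fin 4)).linearIndependent
  ext i j
  fin_cases i <;> fin_cases j <;> simp [ρ, rowTwo, fq, projFourPath, projFourRep, projFourArrowMatrix,
    fe, fa, B4, G1, B3]

end TwoTiltsF

open TwoTiltsF in
theorem F_basis_proj_four_general (K : Type*) [Field K] (m : ℕ) (hm : 2 ≤ m)
    (l : K) :
    (∃ b : Module.Basis (Fin 4) K (fproj K m l 3),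
      (b 0 : FAlg K m l) = fq K m l (B4 * G1) ∧
      (b 1 : FAlg K m l) = fq K m l B4 ∧
      (b 2 : FAlg K m l) = fq K m l (fe 3) ∧
      (b 3 : FAlg K m l) = fq K m l (B4 * G1 * B3)) ∧
    Module.finrank K (fproj K m l 3) = 4 := by
  let b := (Module.Basis.span (linearIndependent_fq_projFourPath (by omega))).map
    (LinearEquiv.ofEq _ _ (span_fq_projFourPath_eq_fproj (l := l) hm))
  have hb (i : Fin 4) : (b i : FAlg K m l) = fq K m l (projFourPath i) := by
    rw [Module.Basis.map_apply, LinearEquiv.coe_ofEq_apply, Module.Basis.coe_span_apply]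
  exact ⟨⟨b, hb 0, hb 1, hb 2, hb 3⟩, by rw [Module.finrank_eq_card_basis b, Fintype.card_fin]⟩

open TwoTiltsF in
/-- The set `{β₄γ₁, β₄, ε₄, β₄γ₁β₃}` is a `K`-basis of the indecomposable
projective module `ẽ₄F` over `F = F(m,λ)`; in particular `dim_K ẽ₄F = 4`.
(Vertex `4` is encoded as `3 : Fin 6`.) -/
theorem F_basis_proj_four (K : Type*) [Field K] (m : ℕ) (hm : 2 ≤ m)
    (l : K) (hl : l ≠ 0) :
    (∃ b : Module.Basis (Fin 4) K (fproj K m l 3),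
      (b 0 : FAlg K m l) = fq K m l (B4 * G1) ∧
      (b 1 : FAlg K m l) = fq K m l B4 ∧
      (b 2 : FAlg K m l) = fq K m l (fe 3) ∧
      (b 3 : FAlg K m l) = fq K m l (B4 * G1 * B3)) ∧
    Module.finrank K (fproj K m l 3) = 4 :=
  F_basis_proj_four_general K m hm l
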